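/- For any quantum relative entropy 𝐃 and any three density matrices ρ, σ, ω on ℂ^d, the triangle-type inequality 𝐃(ρ∥σ) ≤ 𝐃(ρ∥ω) + D_max(ω∥σ) holds (with the convention ±∞ ≤ +∞). -/

import Mathlib

open scoped ENNReal Kronecker ComplexOrder Matrix
open Classical

/-- A density matrix: positive semidefinite with unit trace. -/
def IsDensity {n : Type} [Fintype n] (ρ : Matrix n n ℂ) : Prop :=
  ρ.PosSemidef ∧ ρ.trace = 1

/-- The extension `id_m ⊗ Φ` of a map `Φ` on matrices, acting blockwise. -/
def cpExt {a b : Type} (Φ : Matrix a a ℂ → Matrix b b ℂ) (m : Type)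
    (M : Matrix (m × a) (m × a) ℂ) : Matrix (m × b) (m × b) ℂ :=
  Matrix.of fun p q => Φ (Matrix.of fun k l => M (p.1, k) (q.1, l)) p.2 q.2

/-- A map on matrices is completely positive if every extension `id_m ⊗ Φ`
preserves positive semidefiniteness. -/
def IsCP {a b : Type} [Fintype a] [Fintype b] (Φ : Matrix a a ℂ → Matrix b b ℂ) : Prop :=
  ∀ (m : Type) [Fintype m] (M : Matrix (m × a) (m × a) ℂ),
    M.PosSemidef → (cpExt Φ m M).PosSemidef

/-- A quantum channel: a linear, completely positive, trace-preserving map. -/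
def IsCPTP {a b : Type} [Fintype a] [Fintype b] (Φ : Matrix a a ℂ → Matrix b b ℂ) : Prop :=
  (∀ (c : ℂ) (A B : Matrix a a ℂ), Φ (c • A + B) = c • Φ A + Φ B) ∧
    IsCP Φ ∧ ∀ A : Matrix a a ℂ, (Φ A).trace = A.trace

/-- The projector onto the support of a Hermitian matrix. -/
noncomputable def suppProj {n : Type} [Fintype n] [DecidableEq n]
    (ρ : Matrix n n ℂ) : Matrix n n ℂ :=
  if h : ρ.IsHermitian then
    (h.eigenvectorUnitary : Matrix n n ℂ) *
      Matrix.diagonal (fun i => if h.eigenvalues i = 0 then (0 : ℂ) else 1) *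
      (h.eigenvectorUnitary : Matrix n n ℂ)ᴴ
  else 0

/-- The min relative entropy `D_min(ρ‖σ) = -log₂ Tr[Π_ρ σ]` (with value `+∞` if
`Tr[Π_ρ σ] = 0`, i.e. if `ρ ⊥ σ`). -/
noncomputable def Dmin {n : Type} [Fintype n] [DecidableEq n]
    (ρ σ : Matrix n n ℂ) : ℝ≥0∞ :=
  if ((suppProj ρ * σ).trace.re) = 0 then ∞
  else ENNReal.ofReal (- Real.logb 2 ((suppProj ρ * σ).trace.re))

/-- The max relative entropy `D_max(ρ‖σ) = log₂ min {t : tσ ≥ ρ}` (with value `+∞`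
if no such `t` exists, i.e. if `supp ρ ⊄ supp σ`). -/
noncomputable def Dmax {n : Type} [Fintype n]
    (ρ σ : Matrix n n ℂ) : ℝ≥0∞ :=
  if ∃ t : ℝ, ((t : ℂ) • σ - ρ).PosSemidef then
    ENNReal.ofReal (Real.logb 2 (sInf {t : ℝ | ((t : ℂ) • σ - ρ).PosSemidef}))
  else ∞

/-!
Conditioned on a flag, a quantum channel turns `ω` into `σ` whenever `σ ≥ 2^{-k} ω`: measure
a `k`-qubit flag prepared in the maximally mixed state, keep `ω` on the all-zero outcome
(probability `2^{-k}`) and otherwise prepare the normalized remainder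
`(σ - 2^{-k} ω) / (1 - 2^{-k})`. The same channel maps `ρ ⊗ |0…0⟩⟨0…0|` to `ρ`, so data
processing, additivity and the normalization give `𝐃(ρ‖σ) ≤ 𝐃(ρ‖ω) + k`. The infimum defining
`D_max(ω‖σ) = log₂ t` is attained because the positive semidefinite cone is closed, and
`σ^{⊗n} ≥ t^{-n} ω^{⊗n}`; hence `n 𝐃(ρ‖σ) ≤ n 𝐃(ρ‖ω) + ⌈n log₂ t⌉ + 1`, and dividing by `n`
and letting `n → ∞` proves the claim.
-/

open Matrix

namespace Matrix

variable {n m : Type}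

lemma isClosed_setOf_posSemidef [Fintype n] : IsClosed {M : Matrix n n ℂ | M.PosSemidef} := by
  simp only [posSemidef_iff_dotProduct_mulVec, Set.ofPred_and, Set.ofPred_forall]
  exact (isClosed_eq (by fun_prop) continuous_id).inter
    (isClosed_iInter fun x => isClosed_le continuous_const (by fun_prop))

lemma PosSemidef.ofReal_smul {M : Matrix n n ℂ} (hM : M.PosSemidef) {c : ℝ} (hc : 0 ≤ c) :
    ((c : ℂ) • M).PosSemidef :=
  hM.smul (Complex.zero_le_real.mpr hc)

lemma PosSemidef.sub_smul_of_le [Fintype n] {A B : Matrix n n ℂ} {c c' : ℝ}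
    (h : (A - (c : ℂ) • B).PosSemidef) (hB : B.PosSemidef) (hc : c' ≤ c) :
    (A - (c' : ℂ) • B).PosSemidef := by
  have hsplit : A - (c' : ℂ) • B = (A - (c : ℂ) • B) + ((c - c' : ℝ) : ℂ) • B := by
    push_cast
    rw [sub_smul]
    abel
  rw [hsplit]
  exact h.add (hB.ofReal_smul (sub_nonneg.mpr hc))

lemma PosSemidef.kronecker_sub_kronecker [Fintype n] [Fintype m]
    {A B : Matrix n n ℂ} {C D : Matrix m m ℂ}
    (hAB : (A - B).PosSemidef) (hB : B.PosSemidef) (hCD : (C - D).PosSemidef)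
    (hC : C.PosSemidef) : (A ⊗ₖ C - B ⊗ₖ D).PosSemidef := by
  have hsplit : A ⊗ₖ C - B ⊗ₖ D = (A - B) ⊗ₖ C + B ⊗ₖ (C - D) := by
    ext i j
    simp only [sub_apply, add_apply, kroneckerMap_apply]
    ring
  rw [hsplit]
  exact (hAB.kronecker hC).add (hB.kronecker hCD)

end Matrix

lemma IsDensity.kronecker {a b : Type} [Fintype a] [Fintype b]
    {A : Matrix a a ℂ} {B : Matrix b b ℂ} (hA : IsDensity A) (hB : IsDensity B) :
    IsDensity (A ⊗ₖ B) :=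
  ⟨hA.1.kronecker hB.1, by rw [trace_kronecker, hA.2, hB.2, mul_one]⟩

lemma IsDensity.one_le_of_smul_sub_posSemidef {a : Type} [Fintype a] {σ ω : Matrix a a ℂ}
    (hσ : IsDensity σ) (hω : IsDensity ω) {t : ℝ} (ht : ((t : ℂ) • σ - ω).PosSemidef) :
    1 ≤ t := by
  have htr := ht.trace_nonneg
  rw [trace_sub, trace_smul, hσ.2, hω.2, smul_eq_mul, mul_one, sub_nonneg] at htr
  exact_mod_cast htr

abbrev KronPowIndex (α : Type) : ℕ → Type
  | 0 => α
  | n + 1 => α × KronPowIndex α n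

instance KronPowIndex.instFintype (α : Type) [Fintype α] : ∀ n, Fintype (KronPowIndex α n)
  | 0 => inferInstanceAs (Fintype α)
  | n + 1 => @instFintypeProd α (KronPowIndex α n) _ (KronPowIndex.instFintype α n)

instance KronPowIndex.instDecidableEq (α : Type) [DecidableEq α] :
    ∀ n, DecidableEq (KronPowIndex α n)
  | 0 => inferInstanceAs (DecidableEq α)
  | n + 1 => @instDecidableEqProd α (KronPowIndex α n) _ (KronPowIndex.instDecidableEq α n)

def KronPowIndex.const {α : Type} (i : α) : ∀ n, KronPowIndex α n
  | 0 => i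
  | n + 1 => (i, KronPowIndex.const i n)

lemma KronPowIndex.card (α : Type) [Fintype α] :
    ∀ n, Fintype.card (KronPowIndex α n) = Fintype.card α ^ (n + 1)
  | 0 => (pow_one _).symm
  | n + 1 => by
    rw [pow_succ', ← KronPowIndex.card α n]
    exact Fintype.card_prod α (KronPowIndex α n)

/-- The `(n + 1)`-fold Kronecker power `A ⊗ A ⊗ ⋯ ⊗ A`. -/
def kronPow {α : Type} (A : Matrix α α ℂ) :
    (n : ℕ) → Matrix (KronPowIndex α n) (KronPowIndex α n) ℂ
  | 0 => A
  | n + 1 => A ⊗ₖ kronPow A n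

section KronPow

variable {α : Type}

lemma Matrix.PosSemidef.kronPow [Fintype α] {A : Matrix α α ℂ} (hA : A.PosSemidef) :
    ∀ n, (kronPow A n).PosSemidef
  | 0 => hA
  | n + 1 => hA.kronecker (hA.kronPow n)

lemma IsDensity.kronPow [Fintype α] {A : Matrix α α ℂ} (hA : IsDensity A) :
    ∀ n, IsDensity (kronPow A n)
  | 0 => hA
  | n + 1 => hA.kronecker (hA.kronPow n)

lemma Matrix.PosSemidef.kronPow_sub_smul [Fintype α] {S W : Matrix α α ℂ} {c : ℝ}
    (hc : 0 ≤ c) (hS : S.PosSemidef) (hW : W.PosSemidef) (h : (S - (c : ℂ) • W).PosSemidef) :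
    ∀ n, (_root_.kronPow S n - ((c ^ (n + 1) : ℝ) : ℂ) • _root_.kronPow W n).PosSemidef
  | 0 => by rw [zero_add, pow_one]; exact h
  | n + 1 => by
    have hscale : ((c ^ (n + 2) : ℝ) : ℂ) • _root_.kronPow W (n + 1)
        = ((c : ℂ) • W) ⊗ₖ (((c ^ (n + 1) : ℝ) : ℂ) • _root_.kronPow W n) := by
      rw [_root_.kronPow, smul_kronecker, kronecker_smul, smul_smul]
      push_cast
      ring_nf
    rw [hscale]
    exact h.kronecker_sub_kronecker (hW.ofReal_smul hc)
      (hS.kronPow_sub_smul hc hW h n) (hS.kronPow n)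

lemma kronPow_single [DecidableEq α] (i : α) (x : ℂ) :
    ∀ n, kronPow (single i i x) n =
      single (KronPowIndex.const i n) (KronPowIndex.const i n) (x ^ (n + 1))
  | 0 => by rw [pow_one]; rfl
  | n + 1 => by
    rw [kronPow, kronPow_single i x n, single_kronecker_single, pow_succ' x (n + 1)]
    rfl

lemma kronPow_smul_one [DecidableEq α] (c : ℝ) :
    ∀ n, kronPow ((c : ℂ) • (1 : Matrix α α ℂ)) n = ((c ^ (n + 1) : ℝ) : ℂ) • 1
  | 0 => by simp [kronPow]
  | n + 1 => by
    rw [kronPow, kronPow_smul_one c n, smul_kronecker, kronecker_smul, smul_smul,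
      one_kronecker_one]
    push_cast
    ring_nf

end KronPow

section FlagChannel

variable {A F : Type} [Fintype A] [Fintype F] [DecidableEq F]

/-- Measure the flag register `F` in its standard basis; on outcome `z` keep the system,
on any other outcome discard it and prepare `τ`. -/
noncomputable def flagChannel (τ : Matrix A A ℂ) (z : F)
    (M : Matrix (A × F) (A × F) ℂ) : Matrix A A ℂ :=
  M.submatrix (fun k => (k, z)) (fun l => (l, z)) +
    (∑ y ∈ Finset.univ.erase z, ∑ j, M (j, y) (j, y)) • τ

lemma flagChannel_smul_add (τ : Matrix A A ℂ) (z : F) (c : ℂ)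
    (M N : Matrix (A × F) (A × F) ℂ) :
    flagChannel τ z (c • M + N) = c • flagChannel τ z M + flagChannel τ z N := by
  ext i j
  simp only [flagChannel, Matrix.add_apply, Matrix.smul_apply, submatrix_apply, smul_eq_mul,
    Finset.sum_add_distrib, ← Finset.mul_sum]
  ring

lemma trace_flagChannel {τ : Matrix A A ℂ} (hτ : τ.trace = 1) (z : F)
    (M : Matrix (A × F) (A × F) ℂ) : (flagChannel τ z M).trace = M.trace := by
  have hblocks : M.trace = ∑ y, ∑ j, M (j, y) (j, y) := Fintype.sum_prod_type_right _
  rw [hblocks, ← Finset.add_sum_erase _ _ (Finset.mem_univ z)]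
  simp only [flagChannel, trace_add, trace_smul, hτ, smul_eq_mul, mul_one]
  rfl

lemma flagChannel_isCP {τ : Matrix A A ℂ} (hτ : τ.PosSemidef) (z : F) :
    IsCP (flagChannel τ z) := by
  intro m _ M hM
  have hext : cpExt (flagChannel τ z) m M =
      M.submatrix (fun p : m × A => (p.1, (p.2, z))) (fun p => (p.1, (p.2, z))) +
      ∑ y ∈ Finset.univ.erase z, ∑ j : A,
        M.submatrix (fun p : m => (p, (j, y))) (fun p => (p, (j, y))) ⊗ₖ τ := by
    ext p q
    simp only [cpExt, flagChannel, of_apply, Matrix.add_apply, Matrix.smul_apply,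
      submatrix_apply, Matrix.sum_apply, kroneckerMap_apply, smul_eq_mul, Finset.sum_mul]
  rw [hext]
  exact (hM.submatrix _).add <| posSemidef_sum _ fun y _ =>
    posSemidef_sum _ fun j _ => (hM.submatrix _).kronecker hτ

lemma flagChannel_isCPTP {τ : Matrix A A ℂ} (hτ : IsDensity τ) (z : F) :
    IsCPTP (flagChannel τ z) :=
  ⟨flagChannel_smul_add τ z, flagChannel_isCP hτ.1 z, trace_flagChannel hτ.2 z⟩

lemma flagChannel_kronecker_single (τ R : Matrix A A ℂ) (z : F) :
    flagChannel τ z (R ⊗ₖ single z z 1) = R := by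
  have hoff :
      ∀ y ∈ Finset.univ.erase z, ∑ j, (R ⊗ₖ single z z (1 : ℂ)) (j, y) (j, y) = 0 :=
    fun y hy => by simp [kroneckerMap_apply, (Finset.ne_of_mem_erase hy).symm]
  rw [flagChannel, Finset.sum_eq_zero hoff, zero_smul, add_zero]
  ext i j
  simp [kroneckerMap_apply]

lemma flagChannel_kronecker_smul_one (τ W : Matrix A A ℂ) (z : F) (c : ℂ) :
    flagChannel τ z (W ⊗ₖ (c • (1 : Matrix F F ℂ))) =
      c • W + (((Fintype.card F : ℂ) - 1) * c * W.trace) • τ := by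
  have hblock : ∀ y, ∑ j, (W ⊗ₖ (c • (1 : Matrix F F ℂ))) (j, y) (j, y) = c * W.trace :=
    fun y => by simp [kroneckerMap_apply, trace, Finset.mul_sum, mul_comm]
  simp only [flagChannel, hblock, Finset.sum_erase_eq_sub (Finset.mem_univ z),
    Finset.sum_const, Finset.card_univ, nsmul_eq_mul]
  congr 1
  · ext i j
    simp [kroneckerMap_apply, mul_comm]
  · ring_nf

end FlagChannel

lemma diagonal_one_zero : (diagonal ![1, 0] : Matrix (Fin 2) (Fin 2) ℂ) = single 0 0 1 := by
  ext i j
  fin_cases i <;> fin_cases j <;> rfl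

lemma diagonal_half_half :
    (diagonal ![1 / 2, 1 / 2] : Matrix (Fin 2) (Fin 2) ℂ) = ((2⁻¹ : ℝ) : ℂ) • 1 := by
  ext i j
  fin_cases i <;> fin_cases j <;> simp

lemma isDensity_diagonal_one_zero : IsDensity (diagonal ![1, 0] : Matrix (Fin 2) (Fin 2) ℂ) :=
  ⟨PosSemidef.diagonal fun i => by fin_cases i <;> simp, by simp [trace_diagonal]⟩

lemma isDensity_diagonal_half_half :
    IsDensity (diagonal ![1 / 2, 1 / 2] : Matrix (Fin 2) (Fin 2) ℂ) := by
  rw [diagonal_half_half]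
  refine ⟨PosSemidef.one.ofReal_smul (by norm_num), ?_⟩
  simp [trace_smul]

lemma exists_Dmax_eq_ofReal_logb {a : Type} [Fintype a] {σ ω : Matrix a a ℂ}
    (hσ : IsDensity σ) (hω : IsDensity ω) (hex : ∃ t : ℝ, ((t : ℂ) • σ - ω).PosSemidef) :
    ∃ t : ℝ, 1 ≤ t ∧ ((t : ℂ) • σ - ω).PosSemidef ∧
      Dmax ω σ = ENNReal.ofReal (Real.logb 2 t) := by
  set S := {t : ℝ | ((t : ℂ) • σ - ω).PosSemidef}
  have hclosed : IsClosed S := isClosed_setOf_posSemidef.preimage (by fun_prop)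
  have hbdd : BddBelow S := ⟨1, fun t ht => hσ.one_le_of_smul_sub_posSemidef hω ht⟩
  have hmem : sInf S ∈ S := hclosed.csInf_mem hex hbdd
  exact ⟨sInf S, hσ.one_le_of_smul_sub_posSemidef hω hmem, hmem, if_pos hex⟩

lemma ENNReal.le_of_forall_natCast_add_one_mul_le_add {a b C : ℝ≥0∞} (hC : C ≠ ∞)
    (h : ∀ n : ℕ, (n + 1) * a ≤ (n + 1) * b + C) : a ≤ b := by
  refine ENNReal.le_of_forall_pos_le_add fun ε hε _ => ?_
  have hε0 : (ε : ℝ≥0∞) ≠ 0 := by exact_mod_cast hε.ne'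
  obtain ⟨n, hn⟩ := ENNReal.exists_nat_gt (ENNReal.div_ne_top hC hε0)
  have hCn : C ≤ (n + 1) * ε :=
    calc C = C / ε * ε := (ENNReal.div_mul_cancel hε0 ENNReal.coe_ne_top).symm
      _ ≤ (n + 1) * ε := by gcongr; exact hn.le.trans le_self_add
  rw [← ENNReal.mul_le_mul_iff_right (a := (n + 1 : ℝ≥0∞)) (by simp) (by simp)]
  calc (n + 1) * a ≤ (n + 1) * b + C := h n
    _ ≤ (n + 1) * b + (n + 1) * ε := by gcongr
    _ = (n + 1) * (b + ε) := (mul_add _ _ _).symm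

section RelEntropy

variable (D : ∀ (m : Type) [Fintype m] [DecidableEq m],
  Matrix m m ℂ → Matrix m m ℂ → ℝ≥0∞)

def DataProcessing : Prop :=
  ∀ (a b : Type) [Fintype a] [DecidableEq a] [Fintype b] [DecidableEq b]
    (Φ : Matrix a a ℂ → Matrix b b ℂ), IsCPTP Φ →
    ∀ ρ σ : Matrix a a ℂ, IsDensity ρ → IsDensity σ → D b (Φ ρ) (Φ σ) ≤ D a ρ σ

def TensorAdditive : Prop :=
  ∀ (a b : Type) [Fintype a] [DecidableEq a] [Fintype b] [DecidableEq b]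
    (ρ₁ σ₁ : Matrix a a ℂ) (ρ₂ σ₂ : Matrix b b ℂ),
    IsDensity ρ₁ → IsDensity σ₁ → IsDensity ρ₂ → IsDensity σ₂ →
    D (a × b) (ρ₁ ⊗ₖ ρ₂) (σ₁ ⊗ₖ σ₂) = D a ρ₁ σ₁ + D b ρ₂ σ₂

variable {D}

lemma TensorAdditive.kronPow (hadd : TensorAdditive D) {α : Type} [Fintype α] [DecidableEq α]
    {P Q : Matrix α α ℂ} (hP : IsDensity P) (hQ : IsDensity Q) :
    ∀ n : ℕ, D (KronPowIndex α n) (kronPow P n) (kronPow Q n) = (n + 1) * D α P Q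
  | 0 => by simp [_root_.kronPow]
  | n + 1 => by
    rw [_root_.kronPow, _root_.kronPow,
      hadd _ _ _ _ _ _ hP hQ (hP.kronPow n) (hQ.kronPow n), hadd.kronPow hP hQ n]
    push_cast
    ring

lemma le_add_of_sub_smul_posSemidef (hdpi : DataProcessing D) (hadd : TensorAdditive D)
    (hnorm : D (Fin 2) (diagonal ![1, 0]) (diagonal ![1 / 2, 1 / 2]) = 1)
    {α : Type} [Fintype α] [DecidableEq α] {ρ σ ω : Matrix α α ℂ}
    (hρ : IsDensity ρ) (hσ : IsDensity σ) (hω : IsDensity ω) (k : ℕ)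
    (h : (σ - ((2⁻¹ ^ (k + 1) : ℝ) : ℂ) • ω).PosSemidef) :
    D α ρ σ ≤ D α ρ ω + (k + 1) := by
  set ε : ℝ := 2⁻¹ ^ (k + 1) with hε
  have hε1 : ε < 1 := pow_lt_one₀ (by norm_num) (by norm_num) (by omega)
  have hε1' : (1 : ℂ) - ε ≠ 0 := by exact_mod_cast (by linarith : 1 - ε ≠ 0)
  have hε2 : (2 : ℂ) ^ (k + 1) * ε = 1 := by
    rw [hε]; push_cast; rw [← mul_pow]; norm_num
  set τ := (((1 - ε)⁻¹ : ℝ) : ℂ) • (σ - (ε : ℂ) • ω) with hτ_def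
  have hτ : IsDensity τ := by
    refine ⟨h.ofReal_smul (inv_nonneg.mpr (by linarith)), ?_⟩
    rw [trace_smul, trace_sub, trace_smul, hσ.2, hω.2, smul_eq_mul, smul_eq_mul]
    push_cast
    field_simp
  set z := KronPowIndex.const (0 : Fin 2) k
  set E := kronPow (diagonal ![1, 0]) k with hE_def
  set U := kronPow (diagonal ![1 / 2, 1 / 2]) k with hU_def
  have hE : IsDensity E := isDensity_diagonal_one_zero.kronPow k
  have hU : IsDensity U := isDensity_diagonal_half_half.kronPow k
  have hρE : flagChannel τ z (ρ ⊗ₖ E) = ρ := by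
    rw [hE_def, diagonal_one_zero, kronPow_single, one_pow]
    exact flagChannel_kronecker_single τ ρ z
  have hωU : flagChannel τ z (ω ⊗ₖ U) = σ := by
    rw [hU_def, diagonal_half_half, kronPow_smul_one, flagChannel_kronecker_smul_one,
      KronPowIndex.card, Fintype.card_fin, hω.2, hτ_def, smul_smul]
    have hcoef : (((2 ^ (k + 1) : ℕ) : ℂ) - 1) * ε * 1 * (((1 - ε)⁻¹ : ℝ) : ℂ) = 1 := by
      push_cast
      field_simp
      linear_combination hε2
    rw [← hε, hcoef, one_smul]
    abel
  calc D α ρ σ = D α (flagChannel τ z (ρ ⊗ₖ E)) (flagChannel τ z (ω ⊗ₖ U)) := by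
        rw [hρE, hωU]
    _ ≤ D _ (ρ ⊗ₖ E) (ω ⊗ₖ U) :=
        hdpi _ _ _ (flagChannel_isCPTP hτ z) _ _ (hρ.kronecker hE) (hω.kronecker hU)
    _ = D α ρ ω + (k + 1) := by
        rw [hadd _ _ _ _ _ _ hρ hω hE hU,
          hadd.kronPow isDensity_diagonal_one_zero isDensity_diagonal_half_half k, hnorm, mul_one]

lemma le_add_ofReal_logb_of_smul_sub_posSemidef (hdpi : DataProcessing D)
    (hadd : TensorAdditive D)
    (hnorm : D (Fin 2) (diagonal ![1, 0]) (diagonal ![1 / 2, 1 / 2]) = 1) {α : Type}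
    [Fintype α] [DecidableEq α] {ρ σ ω : Matrix α α ℂ}
    (hρ : IsDensity ρ) (hσ : IsDensity σ) (hω : IsDensity ω) {t : ℝ} (ht : 1 ≤ t)
    (h : ((t : ℂ) • σ - ω).PosSemidef) :
    D α ρ σ ≤ D α ρ ω + ENNReal.ofReal (Real.logb 2 t) := by
  set c := Real.logb 2 t
  have hc : 0 ≤ c := Real.logb_nonneg one_lt_two ht
  have ht0 : 0 < t := zero_lt_one.trans_le ht
  have hσω : (σ - ((t⁻¹ : ℝ) : ℂ) • ω).PosSemidef := by
    have := h.ofReal_smul (inv_nonneg.mpr ht0.le)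
    rwa [smul_sub, smul_smul, ← Complex.ofReal_mul, inv_mul_cancel₀ ht0.ne',
      Complex.ofReal_one, one_smul] at this
  refine ENNReal.le_of_forall_natCast_add_one_mul_le_add (C := 2) ENNReal.ofNat_ne_top
    fun n => ?_
  set k := ⌈(n + 1) * c⌉₊
  have hk : (k : ℝ) ≤ (n + 1) * c + 1 := (Nat.ceil_lt_add_one (by positivity)).le
  have hscale : (2⁻¹ : ℝ) ^ (k + 1) ≤ t⁻¹ ^ (n + 1) := by
    rw [inv_pow, inv_pow]
    refine inv_anti₀ (by positivity) ?_
    calc t ^ (n + 1) ≤ 2 ^ k := by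
          rw [← Real.rpow_natCast 2 k, ← Real.logb_le_iff_le_rpow one_lt_two (by positivity),
            Real.logb_pow]
          push_cast
          exact Nat.le_ceil _
      _ ≤ 2 ^ (k + 1) := pow_le_pow_right₀ one_le_two k.le_succ
  have hpow := (hσ.1.kronPow_sub_smul (inv_nonneg.mpr ht0.le) hω.1 hσω n).sub_smul_of_le
    (hω.kronPow n).1 hscale
  have hflag := le_add_of_sub_smul_posSemidef hdpi hadd hnorm
    (hρ.kronPow n) (hσ.kronPow n) (hω.kronPow n) k hpow
  rw [hadd.kronPow hρ hσ, hadd.kronPow hρ hω] at hflag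
  have hk' : (k + 1 : ℝ≥0∞) ≤ (n + 1) * ENNReal.ofReal c + 2 := by
    have hnc : ENNReal.ofReal ((n + 1) * c + 1) = (n + 1) * ENNReal.ofReal c + 1 := by
      rw [ENNReal.ofReal_add (by positivity) zero_le_one, ENNReal.ofReal_mul (by positivity),
        ENNReal.ofReal_add (Nat.cast_nonneg n) zero_le_one, ENNReal.ofReal_natCast,
        ENNReal.ofReal_one]
    calc (k + 1 : ℝ≥0∞) ≤ ENNReal.ofReal ((n + 1) * c + 1) + 1 := by
          rw [← ENNReal.ofReal_natCast k]
          gcongr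
      _ = (n + 1) * ENNReal.ofReal c + 2 := by rw [hnc, add_assoc, one_add_one_eq_two]
  calc (n + 1) * D α ρ σ ≤ (n + 1) * D α ρ ω + (k + 1) := hflag
    _ ≤ (n + 1) * D α ρ ω + ((n + 1) * ENNReal.ofReal c + 2) := by gcongr
    _ = (n + 1) * (D α ρ ω + ENNReal.ofReal c) + 2 := by ring

end RelEntropy

/-- **Triangle-type inequality.** For any quantum relative entropy `𝐃` and density
matrices `ρ, σ, ω`: `𝐃(ρ‖σ) ≤ 𝐃(ρ‖ω) + D_max(ω‖σ)` (in `ℝ≥0∞`, so the convention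
`±∞ ≤ +∞` is automatic). -/
theorem stmt7
    (D : ∀ (m : Type) [Fintype m] [DecidableEq m],
      Matrix m m ℂ → Matrix m m ℂ → ℝ≥0∞)
    -- data-processing inequality under quantum channels
    (hdpi : ∀ (a b : Type) [Fintype a] [DecidableEq a] [Fintype b] [DecidableEq b]
      (Φ : Matrix a a ℂ → Matrix b b ℂ), IsCPTP Φ →
      ∀ ρ σ : Matrix a a ℂ, IsDensity ρ → IsDensity σ → D b (Φ ρ) (Φ σ) ≤ D a ρ σ)
    -- additivity under tensor products
    (hadd : ∀ (a b : Type) [Fintype a] [DecidableEq a] [Fintype b] [DecidableEq b]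
      (ρ₁ σ₁ : Matrix a a ℂ) (ρ₂ σ₂ : Matrix b b ℂ),
      IsDensity ρ₁ → IsDensity σ₁ → IsDensity ρ₂ → IsDensity σ₂ →
      D (a × b) (ρ₁ ⊗ₖ ρ₂) (σ₁ ⊗ₖ σ₂) = D a ρ₁ σ₁ + D b ρ₂ σ₂)
    -- normalization
    (hnorm : D (Fin 2) (Matrix.diagonal ![1, 0]) (Matrix.diagonal ![1/2, 1/2]) = 1)
    (d : ℕ) (ρ σ ω : Matrix (Fin d) (Fin d) ℂ)
    (hρ : IsDensity ρ) (hσ : IsDensity σ) (hω : IsDensity ω) :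
    D (Fin d) ρ σ ≤ D (Fin d) ρ ω + Dmax ω σ := by
  by_cases hex : ∃ t : ℝ, ((t : ℂ) • σ - ω).PosSemidef
  · obtain ⟨t, ht1, ht, hDmax⟩ := exists_Dmax_eq_ofReal_logb hσ hω hex
    rw [hDmax]
    exact le_add_ofReal_logb_of_smul_sub_posSemidef hdpi hadd hnorm hρ hσ hω ht1 ht
  · rw [Dmax, if_neg hex, add_top]
    exact le_top
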